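/- arXiv:2604.01821 — 2 statements merged into one kernel-verified Lean document; each statement's English description precedes it below -/
import Mathlib

section
/- Let (I, 𝒥, ν) be a probability space and let (P_i)_{i ∈ I} and (Q_i)_{i ∈ I} be measurable families of probability measures on a measurable space Ω. Let f = T(R₀, R₁) be a trade-off function given by probability measures R₀, R₁ on some measurable space. If T(P_i, Q_i)(α) ≥ f(α) for all α ∈ [0,1] and ν-almost every i ∈ I, then the mixtures P = ∫ P_i dν(i) and Q = ∫ Q_i dν(i) satisfy T(P, Q)(α) ≥ f(α) for all α ∈ [0,1]. -/
/-!
Fix a test `φ` for the mixtures. For each `i`, its level `a i = ∫ φ dPᵢ` and its type II error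
`b i = ∫ (1 - φ) dQᵢ` satisfy `f (a i) ≤ T(Pᵢ, Qᵢ)(a i) ≤ b i`. The trade-off function `f` is
nonincreasing, and convex because tests can be randomized, so Jensen's inequality gives
`f α ≤ f (∫ a dν) ≤ ∫ b dν`, and `∫ b dν` is the type II error of `φ` under the mixtures.
-/

open MeasureTheory ProbabilityTheory
open scoped ProbabilityTheory NNReal ENNReal

/-- The trade-off function `T(P,Q)(α) = inf {∫ (1-φ) dQ : φ a test with ∫ φ dP ≤ α}`,
where a test is a measurable function with values in `[0,1]`. -/
noncomputable def tradeoff {Ω : Type*} [MeasurableSpace Ω] (P Q : Measure Ω) (α : ℝ) : ℝ :=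
  sInf { r : ℝ | ∃ φ : Ω → ℝ, Measurable φ ∧ (∀ ω, 0 ≤ φ ω) ∧ (∀ ω, φ ω ≤ 1) ∧
    (∫ ω, φ ω ∂P) ≤ α ∧ r = ∫ ω, (1 - φ ω) ∂Q }

open Set

theorem ConvexOn.exists_affine_le_of_mem_interior {S : Set ℝ} {f : ℝ → ℝ}
    (hf : ConvexOn ℝ S f) {x : ℝ} (hx : x ∈ interior S) :
    ∃ c, ∀ y ∈ S, f x + c * (y - x) ≤ f y := by
  refine ⟨derivWithin f (Ioi x) x, fun y hy => ?_⟩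
  rcases lt_trichotomy y x with hyx | rfl | hxy
  · have h := (hf.slope_le_leftDeriv_of_mem_interior hy hx hyx).trans
      (hf.leftDeriv_le_rightDeriv_of_mem_interior hx)
    rw [slope_def_field, div_le_iff₀ (sub_pos.mpr hyx)] at h
    linarith
  · simp
  · have h := hf.rightDeriv_le_slope_of_mem_interior hx hy hxy
    rw [slope_def_field, le_div_iff₀ (sub_pos.mpr hxy)] at h
    linarith

section Jensen

variable {α : Type*} [MeasurableSpace α] {μ : Measure α} [IsProbabilityMeasure μ]

/-- Unlike `ConvexOn.map_integral_le`, this needs no continuity of `g`: a convex function on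
`Icc a b` can only jump at the endpoints, and if `∫ X` is an endpoint then `X` is a.e. constant. -/
theorem ConvexOn.le_integral_of_ae_le {g : ℝ → ℝ} {a b : ℝ} (hg : ConvexOn ℝ (Icc a b) g)
    {X Y : α → ℝ} (hX : ∀ᵐ x ∂μ, X x ∈ Icc a b) (hXi : Integrable X μ) (hYi : Integrable Y μ)
    (hgXY : ∀ᵐ x ∂μ, g (X x) ≤ Y x) :
    g (∫ x, X x ∂μ) ≤ ∫ x, Y x ∂μ := by
  set m := ∫ x, X x ∂μ
  have hm : m ∈ Icc a b := (convex_Icc a b).integral_mem isClosed_Icc hX hXi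
  have of_ae_eq (hXm : (fun _ => m) =ᵐ[μ] X) : g m ≤ ∫ x, Y x ∂μ := by
    calc g m = ∫ _, g m ∂μ := by simp
      _ ≤ ∫ x, Y x ∂μ := by
        refine integral_mono_ae (integrable_const _) hYi ?_
        filter_upwards [hXm, hgXY] with x hx hxY
        rwa [hx]
  rcases hm.1.eq_or_lt with ham | ham
  · refine of_ae_eq ((integral_eq_iff_of_ae_le (integrable_const m) hXi ?_).mp (by simp [m]))
    filter_upwards [hX] with x hx
    exact ham ▸ hx.1
  rcases hm.2.eq_or_lt with hmb | hmb
  · refine of_ae_eq ((integral_eq_iff_of_ae_le hXi (integrable_const m) ?_).mp (by simp [m])).symm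
    filter_upwards [hX] with x hx
    exact hmb ▸ hx.2
  obtain ⟨c, hc⟩ := hg.exists_affine_le_of_mem_interior (by rw [interior_Icc]; exact ⟨ham, hmb⟩)
  have hdev : Integrable (fun x => c * (X x - m)) μ :=
    (hXi.sub (integrable_const m)).const_mul c
  have hline : Integrable (fun x => g m + c * (X x - m)) μ := (integrable_const _).add hdev
  calc g m = ∫ x, (g m + c * (X x - m)) ∂μ := by
        rw [integral_add (integrable_const _) hdev, integral_const_mul,
          integral_sub hXi (integrable_const m)]
        simp [m]
    _ ≤ ∫ x, Y x ∂μ := by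
        refine integral_mono_ae hline hYi ?_
        filter_upwards [hX, hgXY] with x hx hxY
        exact (hc _ hx).trans hxY

end Jensen

theorem MeasureTheory.Measure.integral_bind_kernel {α β E : Type*} [MeasurableSpace α]
    [MeasurableSpace β] [NormedAddCommGroup E] [NormedSpace ℝ E] {μ : Measure α}
    {κ : Kernel α β} {f : β → E} (hf : Integrable f (κ ∘ₘ μ)) :
    ∫ y, f y ∂(κ ∘ₘ μ) = ∫ x, ∫ y, f y ∂(κ x) ∂μ := by
  rw [Measure.comp_eq_comp_const_apply] at hf ⊢
  rw [Kernel.integral_comp hf]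
  simp

section Tests

variable {Ω : Type*} [MeasurableSpace Ω]

structure IsTest (φ : Ω → ℝ) : Prop where
  measurable : Measurable φ
  nonneg : ∀ ω, 0 ≤ φ ω
  le_one : ∀ ω, φ ω ≤ 1

namespace IsTest

variable {φ ψ : Ω → ℝ}

theorem one_sub (hφ : IsTest φ) : IsTest fun ω => 1 - φ ω :=
  ⟨measurable_const.sub hφ.measurable, fun ω => sub_nonneg.mpr (hφ.le_one ω),
    fun ω => sub_le_self 1 (hφ.nonneg ω)⟩

theorem convex_comb (hφ : IsTest φ) (hψ : IsTest ψ) {a b : ℝ} (ha : 0 ≤ a) (hb : 0 ≤ b)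
    (hab : a + b = 1) : IsTest fun ω => a * φ ω + b * ψ ω :=
  ⟨(hφ.measurable.const_mul a).add (hψ.measurable.const_mul b),
    fun ω => add_nonneg (mul_nonneg ha (hφ.nonneg ω)) (mul_nonneg hb (hψ.nonneg ω)),
    fun ω => by nlinarith [hφ.le_one ω, hψ.le_one ω]⟩

theorem integrable (hφ : IsTest φ) (μ : Measure Ω) [IsFiniteMeasure μ] : Integrable φ μ :=
  .of_bound hφ.measurable.aestronglyMeasurable 1 <| ae_of_all _ fun ω => by
    rw [Real.norm_eq_abs, abs_of_nonneg (hφ.nonneg ω)]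
    exact hφ.le_one ω

theorem integral_linear_comb (hφ : IsTest φ) (hψ : IsTest ψ) {μ : Measure Ω} [IsFiniteMeasure μ]
    (a b : ℝ) : ∫ ω, (a * φ ω + b * ψ ω) ∂μ = a * ∫ ω, φ ω ∂μ + b * ∫ ω, ψ ω ∂μ := by
  rw [integral_add ((hφ.integrable μ).const_mul a) ((hψ.integrable μ).const_mul b),
    integral_const_mul, integral_const_mul]

theorem integral_le_one (hφ : IsTest φ) (μ : Measure Ω) [IsProbabilityMeasure μ] :
    ∫ ω, φ ω ∂μ ≤ 1 :=
  (integral_mono (hφ.integrable μ) (integrable_const 1) hφ.le_one).trans_eq (by simp)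

theorem integral_kernel {I : Type*} [MeasurableSpace I] (hφ : IsTest φ) (κ : Kernel I Ω)
    [IsMarkovKernel κ] : IsTest fun i => ∫ ω, φ ω ∂(κ i) :=
  ⟨(hφ.measurable.stronglyMeasurable.integral_kernel (κ := κ)).measurable,
    fun _ => integral_nonneg hφ.nonneg, fun i => hφ.integral_le_one (κ i)⟩

end IsTest

end Tests

section Tradeoff

variable {Ω : Type*} [MeasurableSpace Ω] {P Q : Measure Ω} {α : ℝ}

theorem tradeoff_le {φ : Ω → ℝ} (hφ : IsTest φ) (hα : ∫ ω, φ ω ∂P ≤ α) :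
    tradeoff P Q α ≤ ∫ ω, (1 - φ ω) ∂Q := by
  refine csInf_le ⟨0, ?_⟩ ⟨φ, hφ.measurable, hφ.nonneg, hφ.le_one, hα, rfl⟩
  rintro _ ⟨ψ, -, -, hψ, -, rfl⟩
  exact integral_nonneg fun ω => sub_nonneg.mpr (hψ ω)

theorem le_tradeoff {c : ℝ} (hα : 0 ≤ α)
    (h : ∀ φ : Ω → ℝ, IsTest φ → ∫ ω, φ ω ∂P ≤ α → c ≤ ∫ ω, (1 - φ ω) ∂Q) :
    c ≤ tradeoff P Q α := by
  refine le_csInf ⟨_, 0, measurable_const, fun _ => le_rfl, fun _ => zero_le_one,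
    by simpa using hα, rfl⟩ ?_
  rintro _ ⟨φ, hm, h0, h1, hφα, rfl⟩
  exact h φ ⟨hm, h0, h1⟩ hφα

theorem exists_isTest_le_tradeoff_add (hα : 0 ≤ α) {ε : ℝ} (hε : 0 < ε) :
    ∃ φ : Ω → ℝ, IsTest φ ∧ ∫ ω, φ ω ∂P ≤ α ∧ ∫ ω, (1 - φ ω) ∂Q ≤ tradeoff P Q α + ε := by
  by_contra! h
  have := le_tradeoff (P := P) (Q := Q) hα fun φ hφ hφα => (h φ hφ hφα).le
  linarith

theorem tradeoff_antitoneOn : AntitoneOn (tradeoff P Q) (Ici 0) :=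
  fun _ hα _ _ hαβ => le_tradeoff hα fun _ hφ hφα => tradeoff_le hφ (hφα.trans hαβ)

theorem tradeoff_convexOn [IsFiniteMeasure P] [IsFiniteMeasure Q] :
    ConvexOn ℝ (Ici 0) (tradeoff P Q) := by
  -- mix two `ε`-optimal tests with the weights of the convex combination
  refine ⟨convex_Ici 0, fun p hp q hq a b ha hb hab => ?_⟩
  simp only [smul_eq_mul]
  refine le_of_forall_pos_le_add fun ε hε => ?_
  obtain ⟨φ, hφ, hφp, hφε⟩ := exists_isTest_le_tradeoff_add (P := P) (Q := Q) hp hε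
  obtain ⟨ψ, hψ, hψq, hψε⟩ := exists_isTest_le_tradeoff_add (P := P) (Q := Q) hq hε
  have hχ := hφ.convex_comb hψ ha hb hab
  have hχP : ∫ ω, (a * φ ω + b * ψ ω) ∂P ≤ a * p + b * q := by
    rw [hφ.integral_linear_comb hψ]
    gcongr
  have hχQ : ∫ ω, (1 - (a * φ ω + b * ψ ω)) ∂Q
      = a * ∫ ω, (1 - φ ω) ∂Q + b * ∫ ω, (1 - ψ ω) ∂Q := by
    rw [← hφ.one_sub.integral_linear_comb hψ.one_sub]
    congr 1 with ω
    linear_combination -hab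
  calc tradeoff P Q (a * p + b * q) ≤ ∫ ω, (1 - (a * φ ω + b * ψ ω)) ∂Q := tradeoff_le hχ hχP
    _ ≤ a * (tradeoff P Q p + ε) + b * (tradeoff P Q q + ε) := by rw [hχQ]; gcongr
    _ = a * tradeoff P Q p + b * tradeoff P Q q + ε := by linear_combination ε * hab

end Tradeoff

/-- Mixtures preserve trade-off lower bounds: if `T(P_i, Q_i) ≥ f` on `[0,1]` for
`ν`-almost every `i`, where `f = T(R₀, R₁)` is a trade-off function, then the mixtures
`P = ∫ P_i dν` and `Q = ∫ Q_i dν` satisfy `T(P, Q) ≥ f` on `[0,1]`. -/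
theorem tradeoff_mixture {I Ω Z : Type*}
    [MeasurableSpace I] [MeasurableSpace Ω] [MeasurableSpace Z]
    (ν : Measure I) [IsProbabilityMeasure ν]
    (P Q : Kernel I Ω) [IsMarkovKernel P] [IsMarkovKernel Q]
    (R₀ R₁ : Measure Z) [IsProbabilityMeasure R₀] [IsProbabilityMeasure R₁]
    (h : ∀ᵐ i ∂ν, ∀ α ∈ Set.Icc (0 : ℝ) 1, tradeoff R₀ R₁ α ≤ tradeoff (P i) (Q i) α) :
    ∀ α ∈ Set.Icc (0 : ℝ) 1,
      tradeoff R₀ R₁ α ≤ tradeoff (ν.bind fun i => P i) (ν.bind fun i => Q i) α := by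
  intro α hα
  refine le_tradeoff hα.1 fun φ hφ hφα => ?_
  have hlevel := hφ.integral_kernel P
  have herror := hφ.one_sub.integral_kernel Q
  have hmean : ∫ i, ∫ ω, φ ω ∂(P i) ∂ν ≤ α :=
    (Measure.integral_bind_kernel (hφ.integrable _)).symm.trans_le hφα
  have hpointwise : ∀ᵐ i ∂ν, tradeoff R₀ R₁ (∫ ω, φ ω ∂(P i)) ≤ ∫ ω, (1 - φ ω) ∂(Q i) := by
    filter_upwards [h] with i hi
    exact (hi _ ⟨hlevel.nonneg i, hlevel.le_one i⟩).trans (tradeoff_le hφ le_rfl)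
  calc tradeoff R₀ R₁ α ≤ tradeoff R₀ R₁ (∫ i, ∫ ω, φ ω ∂(P i) ∂ν) :=
        tradeoff_antitoneOn (mem_Ici.mpr (integral_nonneg hlevel.nonneg)) hα.1 hmean
    _ ≤ ∫ i, ∫ ω, (1 - φ ω) ∂(Q i) ∂ν :=
        (tradeoff_convexOn.subset Icc_subset_Ici_self (convex_Icc 0 1)).le_integral_of_ae_le
          (ae_of_all _ fun i => ⟨hlevel.nonneg i, hlevel.le_one i⟩) (hlevel.integrable ν)
          (herror.integrable ν) hpointwise
    _ = ∫ ω, (1 - φ ω) ∂(ν.bind fun i => Q i) :=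
        (Measure.integral_bind_kernel (hφ.one_sub.integrable _)).symm
end

section
/- Let X be a measurable space, n ∈ ℕ, ε ≥ 0 and δ ∈ [0,1]. An algorithm A (a Markov kernel from X^n to an output space Y) is (ε,δ)-differentially private — i.e., A(D)(S) ≤ e^ε A(D′)(S) + δ for all measurable S ⊆ Y and all adjacent D, D′ — if and only if A is f_{ε,δ}-DP, where f_{ε,δ}(α) = max{0, 1 − δ − e^ε α, e^{−ε}(1 − δ − α)}. -/
/-!
Both directions compare a test with the sets it is built from. A test `φ` with values in
`[0,1]` is, by the layer-cake formula, an average over `t ∈ (0,1]` of the indicators of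
`{φ > t}`, so the set inequality `P S ≤ e^ε Q S + δ` integrates to
`∫ φ dP ≤ e^ε ∫ φ dQ + δ`; applied to `φ` and to `1 - φ`, in both directions, this gives the
two non-trivial lines of `f_{ε,δ}`. Conversely, the indicator test of `Sᶜ` at level
`α = P(Sᶜ)` shows `T(P,Q)(α) ≤ Q(S)`, and the line `e^{-ε}(1 - δ - α)` of `f_{ε,δ}` is then the
set inequality for `S`.
-/

open MeasureTheory ProbabilityTheory
open scoped ProbabilityTheory NNReal ENNReal

/-- Two datasets are adjacent if they differ in at most one coordinate. -/
def Adjacent {X : Type*} {n : ℕ} (D D' : Fin n → X) : Prop :=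
  ∃ i : Fin n, ∀ j : Fin n, j ≠ i → D j = D' j

/-- An algorithm (Markov kernel on datasets) is `f`-DP if `T(A(D), A(D')) ≥ f` on `[0,1]`
for every pair of adjacent datasets. -/
def fDP {X Y : Type*} [MeasurableSpace X] [MeasurableSpace Y] {n : ℕ}
    (A : Kernel (Fin n → X) Y) (f : ℝ → ℝ) : Prop :=
  ∀ D D' : Fin n → X, Adjacent D D' → ∀ α ∈ Set.Icc (0 : ℝ) 1, f α ≤ tradeoff (A D) (A D') α

/-- `A` is `(ε,δ)`-differentially private: `A(D)(S) ≤ e^ε A(D')(S) + δ` for all measurable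
`S` and adjacent `D, D'`. -/
def EpsDeltaDP {X Y : Type*} [MeasurableSpace X] [MeasurableSpace Y] {n : ℕ}
    (A : Kernel (Fin n → X) Y) (ε δ : ℝ) : Prop :=
  ∀ S : Set Y, MeasurableSet S → ∀ D D' : Fin n → X, Adjacent D D' →
    A D S ≤ ENNReal.ofReal (Real.exp ε) * A D' S + ENNReal.ofReal δ

theorem Adjacent.symm {X : Type*} {n : ℕ} {D D' : Fin n → X} (h : Adjacent D D') :
    Adjacent D' D :=
  let ⟨i, hi⟩ := h
  ⟨i, fun j hj => (hi j hj).symm⟩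

/-- The trade-off function `f_{ε,δ}` of `(ε,δ)`-DP. -/
noncomputable def epsDeltaTradeoff (ε δ α : ℝ) : ℝ :=
  max 0 (max (1 - δ - Real.exp ε * α) (Real.exp (-ε) * (1 - δ - α)))

section Tests

variable {Ω : Type*} [MeasurableSpace Ω] {φ : Ω → ℝ}

lemma integrable_of_nonneg_of_le_one (μ : Measure Ω) [IsFiniteMeasure μ] (hφ : Measurable φ)
    (h0 : ∀ ω, 0 ≤ φ ω) (h1 : ∀ ω, φ ω ≤ 1) : Integrable φ μ :=
  .of_bound hφ.aestronglyMeasurable 1 <| .of_forall fun ω => by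
    rw [Real.norm_of_nonneg (h0 ω)]; exact h1 ω

lemma lintegral_ofReal_eq_setLIntegral_Ioc (μ : Measure Ω) (hφ : Measurable φ)
    (h0 : ∀ ω, 0 ≤ φ ω) (h1 : ∀ ω, φ ω ≤ 1) :
    ∫⁻ ω, ENNReal.ofReal (φ ω) ∂μ = ∫⁻ t in Set.Ioc 0 1, μ {ω | t < φ ω} := by
  have h_empty : ∀ t ∈ Set.Ioi (1 : ℝ), μ {ω | t < φ ω} = 0 := fun t ht => by
    have : {ω | t < φ ω} = ∅ :=
      Set.eq_empty_of_forall_notMem fun ω hω => ((h1 ω).trans ht.le).not_gt hω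
    rw [this, measure_empty]
  rw [lintegral_eq_lintegral_meas_lt μ (.of_forall h0) hφ.aemeasurable,
    ← Set.Ioc_union_Ioi_eq_Ioi zero_le_one,
    lintegral_union measurableSet_Ioi (Set.Ioc_disjoint_Ioi le_rfl),
    setLIntegral_congr_fun measurableSet_Ioi h_empty, lintegral_zero, add_zero]

lemma lintegral_le_mul_lintegral_add_of_forall_measure_le {P Q : Measure Ω} {c d : ℝ≥0∞}
    (h : ∀ S, MeasurableSet S → P S ≤ c * Q S + d) (hφ : Measurable φ)
    (h0 : ∀ ω, 0 ≤ φ ω) (h1 : ∀ ω, φ ω ≤ 1) :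
    ∫⁻ ω, ENNReal.ofReal (φ ω) ∂P ≤ c * (∫⁻ ω, ENNReal.ofReal (φ ω) ∂Q) + d := by
  have hQ_meas : Measurable fun t : ℝ => Q {ω | t < φ ω} :=
    Antitone.measurable fun _ _ hst => measure_mono fun _ hx => lt_of_le_of_lt hst hx
  rw [lintegral_ofReal_eq_setLIntegral_Ioc P hφ h0 h1,
    lintegral_ofReal_eq_setLIntegral_Ioc Q hφ h0 h1]
  calc ∫⁻ t in Set.Ioc 0 1, P {ω | t < φ ω}
      ≤ ∫⁻ t in Set.Ioc 0 1, (c * Q {ω | t < φ ω} + d) :=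
        lintegral_mono fun t => h _ (measurableSet_lt measurable_const hφ)
    _ = c * (∫⁻ t in Set.Ioc 0 1, Q {ω | t < φ ω}) + d := by
        rw [lintegral_add_right _ measurable_const, lintegral_const_mul _ hQ_meas,
          setLIntegral_const, Real.volume_Ioc]
        norm_num

lemma integral_le_mul_integral_add_of_forall_measure_le {P Q : Measure Ω}
    [IsFiniteMeasure P] [IsFiniteMeasure Q] {c d : ℝ} (hc : 0 ≤ c) (hd : 0 ≤ d)
    (h : ∀ S, MeasurableSet S → P S ≤ ENNReal.ofReal c * Q S + ENNReal.ofReal d)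
    (hφ : Measurable φ) (h0 : ∀ ω, 0 ≤ φ ω) (h1 : ∀ ω, φ ω ≤ 1) :
    ∫ ω, φ ω ∂P ≤ c * ∫ ω, φ ω ∂Q + d := by
  have hφQ : 0 ≤ ∫ ω, φ ω ∂Q := integral_nonneg h0
  rw [← ENNReal.ofReal_le_ofReal_iff (by positivity), ENNReal.ofReal_add (by positivity) hd,
    ENNReal.ofReal_mul hc,
    ofReal_integral_eq_lintegral_ofReal (integrable_of_nonneg_of_le_one P hφ h0 h1) (.of_forall h0),
    ofReal_integral_eq_lintegral_ofReal (integrable_of_nonneg_of_le_one Q hφ h0 h1) (.of_forall h0)]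
  exact lintegral_le_mul_lintegral_add_of_forall_measure_le h hφ h0 h1

lemma integral_one_sub (μ : Measure Ω) [IsProbabilityMeasure μ] (hφ : Integrable φ μ) :
    ∫ ω, (1 - φ ω) ∂μ = 1 - ∫ ω, φ ω ∂μ := by
  rw [integral_sub (integrable_const 1) hφ, integral_const, probReal_univ, one_smul]

end Tests

section Tradeoff

variable {Ω : Type*} [MeasurableSpace Ω] {P Q : Measure Ω}

lemma le_tradeoff_of_forall_test {g α : ℝ} (hα : 0 ≤ α)
    (h : ∀ φ : Ω → ℝ, Measurable φ → (∀ ω, 0 ≤ φ ω) → (∀ ω, φ ω ≤ 1) →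
      ∫ ω, φ ω ∂P ≤ α → g ≤ ∫ ω, (1 - φ ω) ∂Q) :
    g ≤ tradeoff P Q α := by
  refine le_csInf ⟨_, 0, measurable_const, fun _ => le_rfl, fun _ => zero_le_one, ?_, rfl⟩ ?_
  · simpa using hα
  · rintro r ⟨φ, hφ, h0, h1, hφP, rfl⟩
    exact h φ hφ h0 h1 hφP

lemma tradeoff_measureReal_compl_le {S : Set Ω} (hS : MeasurableSet S) :
    tradeoff P Q (P.real Sᶜ) ≤ Q.real S := by
  have h_bdd : BddBelow {r : ℝ | ∃ φ : Ω → ℝ, Measurable φ ∧ (∀ ω, 0 ≤ φ ω) ∧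
      (∀ ω, φ ω ≤ 1) ∧ ∫ ω, φ ω ∂P ≤ P.real Sᶜ ∧ r = ∫ ω, (1 - φ ω) ∂Q} := by
    refine ⟨0, ?_⟩
    rintro r ⟨φ, -, -, h1, -, rfl⟩
    exact integral_nonneg fun ω => sub_nonneg.mpr (h1 ω)
  have h_one_sub : (fun ω => 1 - Sᶜ.indicator 1 ω) = S.indicator (1 : Ω → ℝ) := by
    ext ω
    by_cases hω : ω ∈ S <;> simp [hω]
  refine csInf_le h_bdd ⟨Sᶜ.indicator 1, measurable_one.indicator hS.compl,
    Set.indicator_nonneg fun _ _ => zero_le_one, Set.indicator_le_self' fun _ _ => zero_le_one,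
    (integral_indicator_one hS.compl).le, ?_⟩
  rw [h_one_sub, integral_indicator_one hS]

end Tradeoff
section Measures

variable {Ω : Type*} [MeasurableSpace Ω] {P Q : Measure Ω}

lemma measure_le_ofReal_mul_add_iff [IsFiniteMeasure P] [IsFiniteMeasure Q] {c d : ℝ}
    (hc : 0 ≤ c) (hd : 0 ≤ d) (S : Set Ω) :
    P S ≤ ENNReal.ofReal c * Q S + ENNReal.ofReal d ↔ P.real S ≤ c * Q.real S + d := by
  rw [← ENNReal.ofReal_le_ofReal_iff (by positivity), ENNReal.ofReal_add (by positivity) hd,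
    ENNReal.ofReal_mul hc, measureReal_def, measureReal_def,
    ENNReal.ofReal_toReal (measure_ne_top P S), ENNReal.ofReal_toReal (measure_ne_top Q S)]

variable [IsProbabilityMeasure P] [IsProbabilityMeasure Q] {ε δ : ℝ}

lemma epsDeltaTradeoff_le_tradeoff (hδ : 0 ≤ δ)
    (hPQ : ∀ S, MeasurableSet S → P S ≤ ENNReal.ofReal (Real.exp ε) * Q S + ENNReal.ofReal δ)
    (hQP : ∀ S, MeasurableSet S → Q S ≤ ENNReal.ofReal (Real.exp ε) * P S + ENNReal.ofReal δ)
    {α : ℝ} (hα : 0 ≤ α) :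
    epsDeltaTradeoff ε δ α ≤ tradeoff P Q α := by
  refine le_tradeoff_of_forall_test hα fun φ hφ h0 h1 hφP => ?_
  have h_one_sub (μ : Measure Ω) [IsProbabilityMeasure μ] :
      ∫ ω, (1 - φ ω) ∂μ = 1 - ∫ ω, φ ω ∂μ :=
    integral_one_sub μ (integrable_of_nonneg_of_le_one μ hφ h0 h1)
  have hφQ := integral_le_mul_integral_add_of_forall_measure_le (Real.exp_pos ε).le hδ hQP
    hφ h0 h1
  have hφP' := integral_le_mul_integral_add_of_forall_measure_le (Real.exp_pos ε).le hδ hPQ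
    (hφ.const_sub 1) (fun ω => sub_nonneg.mpr (h1 ω)) (fun ω => sub_le_self 1 (h0 ω))
  rw [h_one_sub P, h_one_sub Q] at hφP'
  refine max_le (integral_nonneg fun ω => sub_nonneg.mpr (h1 ω)) (max_le ?_ ?_)
  · rw [h_one_sub Q]
    linarith [mul_le_mul_of_nonneg_left hφP (Real.exp_pos ε).le]
  · rw [Real.exp_neg, inv_mul_le_iff₀ (Real.exp_pos ε), h_one_sub Q]
    linarith

lemma measure_le_of_epsDeltaTradeoff_le_tradeoff (hδ : 0 ≤ δ)
    (h : ∀ α ∈ Set.Icc (0 : ℝ) 1, epsDeltaTradeoff ε δ α ≤ tradeoff P Q α)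
    {S : Set Ω} (hS : MeasurableSet S) :
    P S ≤ ENNReal.ofReal (Real.exp ε) * Q S + ENNReal.ofReal δ := by
  have hα : P.real Sᶜ ∈ Set.Icc (0 : ℝ) 1 := ⟨measureReal_nonneg, measureReal_le_one⟩
  have h_bound : Real.exp (-ε) * (1 - δ - P.real Sᶜ) ≤ Q.real S :=
    ((le_max_right _ _).trans (le_max_right _ _)).trans
      ((h _ hα).trans (tradeoff_measureReal_compl_le hS))
  rw [probReal_compl_eq_one_sub hS, Real.exp_neg, inv_mul_le_iff₀ (Real.exp_pos ε)] at h_bound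
  rw [measure_le_ofReal_mul_add_iff (Real.exp_pos ε).le hδ]
  linarith

end Measures

theorem epsDeltaDP_iff_fDP_general {X Y : Type*} [MeasurableSpace X] [MeasurableSpace Y] {n : ℕ}
    (ε δ : ℝ) (hδ : δ ∈ Set.Icc (0 : ℝ) 1)
    (A : Kernel (Fin n → X) Y) [IsMarkovKernel A] :
    EpsDeltaDP A ε δ ↔
      fDP A (fun α => max 0 (max (1 - δ - Real.exp ε * α)
        (Real.exp (-ε) * (1 - δ - α)))) := by
  constructor
  · intro hDP D D' hadj α hα
    exact epsDeltaTradeoff_le_tradeoff hδ.1 (fun S hS => hDP S hS D D' hadj)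
      (fun S hS => hDP S hS D' D hadj.symm) hα.1
  · intro hf S hS D D' hadj
    exact measure_le_of_epsDeltaTradeoff_le_tradeoff hδ.1 (hf D D' hadj) hS

/-- `(ε,δ)`-DP is equivalent to `f_{ε,δ}`-DP, where
`f_{ε,δ}(α) = max {0, 1 − δ − e^ε α, e^{−ε}(1 − δ − α)}`. -/
theorem epsDeltaDP_iff_fDP {X Y : Type*} [MeasurableSpace X] [MeasurableSpace Y] {n : ℕ}
    (ε δ : ℝ) (hε : 0 ≤ ε) (hδ : δ ∈ Set.Icc (0 : ℝ) 1)
    (A : Kernel (Fin n → X) Y) [IsMarkovKernel A] :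
    EpsDeltaDP A ε δ ↔
      fDP A (fun α => max 0 (max (1 - δ - Real.exp ε * α)
        (Real.exp (-ε) * (1 - δ - α)))) :=
  epsDeltaDP_iff_fDP_general ε δ hδ A
end
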